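/- arXiv:math/0301127 — 2 statements merged into one kernel-verified Lean document; each statement's English description precedes it below -/
import Mathlib

section
/- Let $a<b$ be real numbers, $u\in L^2(a,b;\mathbb{C})$, and $\alpha,\beta\in\mathbb{R}$. Then for every $\varepsilon>0$ there exists $M>0$ (depending on $\varepsilon$, $u$, $\alpha$, $\beta$, $a$, $b$) such that for every absolutely continuous function $y:[a,b]\to\mathbb{C}$ whose derivative $y'$ belongs to $L^2(a,b)$: $\Big|\int_a^b u\,y'\,\overline{y}\,dx\Big| + \Big|\int_a^b u\,y\,\overline{y'}\,dx\Big| + |\alpha|\,|y(a)|^2 + |\beta|\,|y(b)|^2 \;\le\; \varepsilon\int_a^b|y'|^2\,dx \;+\; M\int_a^b|y|^2\,dx$. -/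
/-!
The estimate rests on an Ehrling-type inequality. If `x` lies in a window of length `h ≤ b - a`
inside `[a, b]`, then for every `t` in the window
`‖y x‖² ≤ 2‖y t‖² + 2‖∫ₜˣ y'‖² ≤ 2‖y t‖² + 2h ∫‖y'‖²` by Cauchy–Schwarz, and averaging over `t`
gives `sup ‖y‖² ≤ 2h ∫‖y'‖² + (2/h) ∫‖y‖²` with `h` as small as we like. By Cauchy–Schwarz both
form terms are at most `sup ‖y‖ · ‖u‖₂ ‖y'‖₂` and the boundary terms are multiples of
`sup ‖y‖²`, so Young's inequality absorbs everything into `ε ∫‖y'‖² + M ∫‖y‖²`.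
-/

open Set ComplexConjugate MeasureTheory
open scoped Interval

section CauchySchwarz

variable {X E F G : Type*} [MeasurableSpace X] {μ : Measure X} [NormedAddCommGroup E]
  [NormedAddCommGroup F] [NormedAddCommGroup G] [NormedSpace ℝ G]

theorem integral_norm_mul_norm_le_sqrt_mul_sqrt {f : X → E} {g : X → F} (hf : MemLp f 2 μ)
    (hg : MemLp g 2 μ) :
    ∫ x, ‖f x‖ * ‖g x‖ ∂μ ≤ √(∫ x, ‖f x‖ ^ 2 ∂μ) * √(∫ x, ‖g x‖ ^ 2 ∂μ) := by
  have h := integral_mul_norm_le_Lp_mul_Lq (μ := μ) Real.HolderConjugate.two_two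
    (by simpa using hf.norm) (by simpa using hg.norm)
  simpa only [norm_norm, Real.sqrt_eq_rpow, Real.rpow_two] using h

theorem sq_norm_integral_le_measureReal_mul [IsFiniteMeasure μ] {f : X → G} (hf : MemLp f 2 μ) :
    ‖∫ x, f x ∂μ‖ ^ 2 ≤ μ.real univ * ∫ x, ‖f x‖ ^ 2 ∂μ := by
  have hcs := integral_norm_mul_norm_le_sqrt_mul_sqrt hf (memLp_const (1 : ℝ) (μ := μ))
  simp only [norm_one, mul_one, one_pow, integral_const, smul_eq_mul] at hcs
  calc ‖∫ x, f x ∂μ‖ ^ 2 ≤ (∫ x, ‖f x‖ ∂μ) ^ 2 := by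
        gcongr; exact norm_integral_le_integral_norm f
    _ ≤ (√(∫ x, ‖f x‖ ^ 2 ∂μ) * √(μ.real univ)) ^ 2 := by gcongr
    _ = μ.real univ * ∫ x, ‖f x‖ ^ 2 ∂μ := by
        rw [mul_pow, Real.sq_sqrt (integral_nonneg fun _ => by positivity),
          Real.sq_sqrt measureReal_nonneg, mul_comm]

theorem sq_norm_intervalIntegral_le {f : ℝ → G} {s t : ℝ}
    (hf : MemLp f 2 (volume.restrict (Ι s t))) :
    ‖∫ x in s..t, f x‖ ^ 2 ≤ |t - s| * ∫ x in Ι s t, ‖f x‖ ^ 2 := by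
  have : IsFiniteMeasure (volume.restrict (Ι s t)) := by
    rw [isFiniteMeasure_restrict, Real.volume_uIoc]; exact ENNReal.ofReal_ne_top
  have := sq_norm_integral_le_measureReal_mul hf
  rwa [measureReal_restrict_apply_univ, measureReal_def, Real.volume_uIoc,
    ENNReal.toReal_ofReal (abs_nonneg _),
    ← intervalIntegral.norm_integral_eq_norm_integral_uIoc] at this

theorem norm_integral_le_of_norm_le_mul_norm_mul_norm {φ : X → G} {f : X → E} {g : X → F}
    {R : ℝ} (hR : 0 ≤ R) (hf : MemLp f 2 μ) (hg : MemLp g 2 μ)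
    (hφ : ∀ᵐ x ∂μ, ‖φ x‖ ≤ R * (‖f x‖ * ‖g x‖)) :
    ‖∫ x, φ x ∂μ‖ ≤ R * (√(∫ x, ‖f x‖ ^ 2 ∂μ) * √(∫ x, ‖g x‖ ^ 2 ∂μ)) := by
  have hfg : Integrable (fun x => ‖f x‖ * ‖g x‖) μ := hf.norm.integrable_mul hg.norm
  calc ‖∫ x, φ x ∂μ‖ ≤ ∫ x, R * (‖f x‖ * ‖g x‖) ∂μ :=
        norm_integral_le_of_norm_le (hfg.const_mul R) hφ
    _ = R * ∫ x, ‖f x‖ * ‖g x‖ ∂μ := integral_const_mul R _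
    _ ≤ _ := by gcongr; exact integral_norm_mul_norm_le_sqrt_mul_sqrt hf hg

end CauchySchwarz

section Primitive

variable {E : Type*} [NormedAddCommGroup E] {a b : ℝ} {y y' : ℝ → E}

theorem intervalIntegrable_of_memLp_Ioc (hy' : MemLp y' 2 (volume.restrict (Ioc a b)))
    {p q : ℝ} (hp : p ∈ Icc a b) (hq : q ∈ Icc a b) : IntervalIntegrable y' volume p q := by
  have : IntegrableOn y' (Icc a b) :=
    (integrableOn_Icc_iff_integrableOn_Ioc).2 (hy'.integrable one_le_two)
  exact (this.mono_set (uIcc_subset_Icc hp hq)).intervalIntegrable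

variable [NormedSpace ℝ E]

theorem mul_sq_norm_le_of_sub_eq_integral {c d x : ℝ} (hcd : c ≤ d)
    (hy' : MemLp y' 2 (volume.restrict (Ioc c d)))
    (hy : IntegrableOn (fun t => ‖y t‖ ^ 2) (Ioc c d))
    (hx : x ∈ Icc c d) (hsub : ∀ t ∈ Icc c d, y x - y t = ∫ s in t..x, y' s) :
    (d - c) * ‖y x‖ ^ 2 ≤
      2 * (∫ t in Ioc c d, ‖y t‖ ^ 2) + 2 * (d - c) ^ 2 * ∫ t in Ioc c d, ‖y' t‖ ^ 2 := by
  set D := ∫ t in Ioc c d, ‖y' t‖ ^ 2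
  have hpointwise : ∀ t ∈ Icc c d, ‖y x‖ ^ 2 ≤ 2 * ‖y t‖ ^ 2 + 2 * (d - c) * D := by
    intro t ht
    have hsubset : Ι t x ⊆ Ioc c d := by
      rw [← uIoc_of_le hcd]
      exact uIoc_subset_uIoc_of_uIcc_subset_uIcc
        (uIcc_subset_uIcc (by rwa [uIcc_of_le hcd]) (by rwa [uIcc_of_le hcd]))
    have hincr : ‖y x - y t‖ ^ 2 ≤ (d - c) * D := by
      rw [hsub t ht]
      refine (sq_norm_intervalIntegral_le
        (hy'.mono_measure (Measure.restrict_mono hsubset le_rfl))).trans ?_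
      gcongr
      · rw [abs_le]; constructor <;> linarith [ht.1, ht.2, hx.1, hx.2]
      · exact setIntegral_mono_set (hy'.integrable_norm_pow two_ne_zero)
          (Filter.Eventually.of_forall fun _ => by positivity) hsubset.eventuallyLE
    calc ‖y x‖ ^ 2 ≤ (‖y t‖ + ‖y x - y t‖) ^ 2 := by
          gcongr; exact norm_le_insert' (y x) (y t)
      _ ≤ 2 * (‖y t‖ ^ 2 + ‖y x - y t‖ ^ 2) := add_sq_le
      _ ≤ 2 * ‖y t‖ ^ 2 + 2 * (d - c) * D := by linarith
  have hconst : ∀ C : ℝ, IntegrableOn (fun _ => C) (Ioc c d) := fun C =>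
    integrableOn_const (by simp)
  have hmean := setIntegral_mono_on (hconst _) ((hy.const_mul 2).add (hconst _)) measurableSet_Ioc
    fun t ht => hpointwise t (Ioc_subset_Icc_self ht)
  simp only [Pi.add_apply] at hmean
  rw [integral_add (hy.const_mul 2) (hconst _), integral_const_mul] at hmean
  simp only [integral_const, measureReal_restrict_apply_univ, Real.volume_real_Ioc_of_le hcd,
    smul_eq_mul] at hmean
  calc (d - c) * ‖y x‖ ^ 2 ≤ _ := hmean
    _ = _ := by ring

theorem sub_eq_intervalIntegral_of_primitive (hy' : MemLp y' 2 (volume.restrict (Ioc a b)))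
    (hrep : ∀ x ∈ Icc a b, y x = y a + ∫ t in a..x, y' t) {x t : ℝ} (hx : x ∈ Icc a b)
    (ht : t ∈ Icc a b) : y x - y t = ∫ s in t..x, y' s := by
  have ha : a ∈ Icc a b := left_mem_Icc.2 (hx.1.trans hx.2)
  rw [hrep x hx, hrep t ht, ← intervalIntegral.integral_interval_sub_left
    (intervalIntegrable_of_memLp_Ioc hy' ha hx) (intervalIntegrable_of_memLp_Ioc hy' ha ht)]
  exact add_sub_add_left_eq_sub _ _ _

theorem continuousOn_of_primitive (hy' : MemLp y' 2 (volume.restrict (Ioc a b)))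
    (hrep : ∀ x ∈ Icc a b, y x = y a + ∫ t in a..x, y' t) : ContinuousOn y (Icc a b) := by
  rcases lt_or_ge b a with hba | hab
  · simp [Icc_eq_empty_of_lt hba]
  have hprim := intervalIntegral.continuousOn_primitive_interval'
    (intervalIntegrable_of_memLp_Ioc hy' (left_mem_Icc.2 hab) (right_mem_Icc.2 hab)) left_mem_uIcc
  rw [uIcc_of_le hab] at hprim
  exact (continuousOn_const.add hprim).congr hrep

theorem mul_sq_norm_le_of_primitive (hy' : MemLp y' 2 (volume.restrict (Ioc a b)))
    (hrep : ∀ x ∈ Icc a b, y x = y a + ∫ t in a..x, y' t) {h : ℝ} (hh : 0 ≤ h)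
    (hhab : h ≤ b - a) {x : ℝ} (hx : x ∈ Icc a b) :
    h * ‖y x‖ ^ 2 ≤
      2 * (∫ t in Ioc a b, ‖y t‖ ^ 2) + 2 * h ^ 2 * ∫ t in Ioc a b, ‖y' t‖ ^ 2 := by
  obtain ⟨c, hac, hcb, hxc⟩ : ∃ c, a ≤ c ∧ c + h ≤ b ∧ x ∈ Icc c (c + h) :=
    ⟨min x (b - h), le_min hx.1 (by linarith), by linarith [min_le_right x (b - h)],
      min_le_left _ _, by rcases le_total x (b - h) with h' | h' <;> simp [h'] <;> linarith [hx.2]⟩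
  have hwindow : Ioc c (c + h) ⊆ Ioc a b := Ioc_subset_Ioc hac hcb
  have hy : IntegrableOn (fun t => ‖y t‖ ^ 2) (Ioc a b) :=
    (((continuousOn_of_primitive hy' hrep).norm.pow 2).integrableOn_compact isCompact_Icc).mono_set
      Ioc_subset_Icc_self
  have hlocal := mul_sq_norm_le_of_sub_eq_integral (by linarith)
    (hy'.mono_measure (Measure.restrict_mono hwindow le_rfl)) (hy.mono_set hwindow) hxc
    fun t ht => sub_eq_intervalIntegral_of_primitive hy' hrep (Icc_subset_Icc hac hcb hxc)
      (Icc_subset_Icc hac hcb ht)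
  rw [add_sub_cancel_left] at hlocal
  refine hlocal.trans ?_
  gcongr
  · exact .of_forall fun _ => by positivity
  · exact .of_forall fun _ => by positivity
  · exact hy'.integrable_norm_pow two_ne_zero

theorem exists_sq_norm_le_mul_add (hab : a < b) {δ : ℝ} (hδ : 0 < δ) :
    ∃ M > 0, ∀ y y' : ℝ → E, MemLp y' 2 (volume.restrict (Ioc a b)) →
      (∀ x ∈ Icc a b, y x = y a + ∫ t in a..x, y' t) → ∀ x ∈ Icc a b,
        ‖y x‖ ^ 2 ≤ δ * (∫ t in Ioc a b, ‖y' t‖ ^ 2) + M * ∫ t in Ioc a b, ‖y t‖ ^ 2 := by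
  set h := min (b - a) (δ / 2)
  have hh : 0 < h := lt_min (by linarith) (by positivity)
  refine ⟨2 / h, by positivity, fun y y' hy' hrep x hx => ?_⟩
  have hD : 0 ≤ ∫ t in Ioc a b, ‖y' t‖ ^ 2 := integral_nonneg fun _ => by positivity
  have h2h : 2 * h ≤ δ := by linarith [min_le_right (b - a) (δ / 2)]
  have hmean := mul_sq_norm_le_of_primitive hy' hrep hh.le (min_le_left _ _) hx
  rw [← mul_le_mul_iff_of_pos_left hh, mul_add, ← mul_assoc h (2 / h), mul_div_cancel₀ 2 hh.ne']
  nlinarith [hmean, mul_le_mul_of_nonneg_right h2h (mul_nonneg hh.le hD)]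

end Primitive

theorem norm_integral_mul_conj_add_norm_integral_mul_conj_le {a b : ℝ} (hab : a ≤ b)
    {u y y' : ℝ → ℂ}
    (hu : MemLp u 2 (volume.restrict (Ioc a b))) (hy' : MemLp y' 2 (volume.restrict (Ioc a b)))
    {R : ℝ} (hR : 0 ≤ R) (hy : ∀ x ∈ Icc a b, ‖y x‖ ≤ R) :
    ‖∫ x in a..b, u x * y' x * conj (y x)‖ + ‖∫ x in a..b, u x * y x * conj (y' x)‖ ≤
      2 * (R * (√(∫ x in Ioc a b, ‖u x‖ ^ 2) * √(∫ x in Ioc a b, ‖y' x‖ ^ 2))) := by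
  have hbound : ∀ᵐ x ∂(volume.restrict (Ioc a b)), ‖y x‖ ≤ R :=
    (ae_restrict_mem measurableSet_Ioc).mono fun x hx => hy x (Ioc_subset_Icc_self hx)
  rw [intervalIntegral.integral_of_le hab, intervalIntegral.integral_of_le hab, two_mul]
  gcongr
  all_goals refine norm_integral_le_of_norm_le_mul_norm_mul_norm hR hu hy' ?_
  all_goals refine hbound.mono fun x hx => ?_
  all_goals simp only [norm_mul, Complex.norm_conj]
  all_goals nlinarith [mul_nonneg (norm_nonneg (u x)) (norm_nonneg (y' x))]

theorem form_add_boundary_le_of_sq_norm_le {a b ε S : ℝ} (hab : a ≤ b) (hε : 0 < ε)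
    (hS : 0 ≤ S) {u y y' : ℝ → ℂ} (hu : MemLp u 2 (volume.restrict (Ioc a b)))
    (hy' : MemLp y' 2 (volume.restrict (Ioc a b))) (α β : ℝ)
    (hsup : ∀ x ∈ Icc a b, ‖y x‖ ^ 2 ≤ S) :
    ‖∫ x in a..b, u x * y' x * conj (y x)‖ + ‖∫ x in a..b, u x * y x * conj (y' x)‖
        + |α| * ‖y a‖ ^ 2 + |β| * ‖y b‖ ^ 2 ≤
      ε / 2 * (∫ x in Ioc a b, ‖y' x‖ ^ 2)
        + ((ε / 2)⁻¹ * (∫ x in Ioc a b, ‖u x‖ ^ 2) + |α| + |β|) * S := by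
  set C := √(∫ x in Ioc a b, ‖u x‖ ^ 2)
  set D := ∫ x in Ioc a b, ‖y' x‖ ^ 2
  have hD : 0 ≤ D := integral_nonneg fun _ => by positivity
  have hform : _ ≤ 2 * (√S * (C * √D)) :=
    norm_integral_mul_conj_add_norm_integral_mul_conj_le hab hu hy' (Real.sqrt_nonneg S)
      fun x hx => Real.le_sqrt_of_sq_le (hsup x hx)
  have hC : C ^ 2 = ∫ x in Ioc a b, ‖u x‖ ^ 2 :=
    Real.sq_sqrt (integral_nonneg fun _ => by positivity)
  have hyoung := two_mul_le_add_mul_sq (ε := ε / 2) (a := √D) (b := C * √S) (by positivity)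
  rw [mul_pow, Real.sq_sqrt hD, Real.sq_sqrt hS, hC] at hyoung
  calc _ ≤ 2 * (√S * (C * √D)) + |α| * S + |β| * S := by
        gcongr
        exacts [hsup a (left_mem_Icc.2 hab), hsup b (right_mem_Icc.2 hab)]
    _ ≤ _ := by linear_combination hyoung

theorem intervalIntegral_add_const_of_le {a b : ℝ} (hab : a ≤ b) {f : ℝ → ℝ}
    (hf : IntegrableOn f (Ioc a b)) (c : ℝ) :
    ∫ x in a..b, (f x + c) = (∫ x in Ioc a b, f x) + (b - a) * c := by
  rw [intervalIntegral.integral_add ((intervalIntegrable_iff_integrableOn_Ioc_of_le hab).2 hf)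
    intervalIntegrable_const, intervalIntegral.integral_const, smul_eq_mul,
    intervalIntegral.integral_of_le hab]

/-- For `u ∈ L²(a,b)` and `α, β ∈ ℝ`, for every `ε > 0` there is `M > 0`
such that for every absolutely continuous `y : [a,b] → ℂ` with `y' ∈ L²(a,b)`:
`|∫ u y' ȳ| + |∫ u y ȳ'| + |α||y(a)|² + |β||y(b)|² ≤ ε ∫|y'|² + M ∫|y|²`. -/
theorem schrodinger_neumann_form_relative_bound
    (a b : ℝ) (hab : a < b) (u : ℝ → ℂ)
    (hu : MemLp u 2 (volume.restrict (Ioo a b))) (α β : ℝ) :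
    ∀ ε > 0, ∃ M > 0, ∀ y y' : ℝ → ℂ,
      MemLp y' 2 (volume.restrict (Ioo a b)) →
      (∀ x ∈ Icc a b, y x = y a + ∫ t in a..x, y' t) →
      ‖∫ x in a..b, u x * y' x * conj (y x)‖
          + ‖∫ x in a..b, u x * y x * conj (y' x)‖
          + |α| * ‖y a‖ ^ 2 + |β| * ‖y b‖ ^ 2 ≤
        ε * ∫ x in a..b, ‖y' x‖ ^ 2 + M * ∫ x in a..b, ‖y x‖ ^ 2 := by
  intro ε hε
  have hIoo : volume.restrict (Ioo a b) = volume.restrict (Ioc a b) :=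
    Measure.restrict_congr_set Ioo_ae_eq_Ioc
  rw [hIoo] at hu
  -- `K - 1` is the coefficient of `sup ‖y‖²` in `form_add_boundary_le_of_sq_norm_le`, and
  -- `δ = ε / (2K)` turns `K * sup ‖y‖²` into at most `ε/2 ∫‖y'‖² + K M ∫‖y‖²`.
  set K := (ε / 2)⁻¹ * (∫ x in Ioc a b, ‖u x‖ ^ 2) + |α| + |β| + 1
  have hK : 0 < K := by positivity
  obtain ⟨M, hM, hsup⟩ := exists_sq_norm_le_mul_add (E := ℂ) hab (δ := ε / (2 * K)) (by positivity)
  refine ⟨K * M / (ε * (b - a)), by have := sub_pos.2 hab; positivity, fun y y' hy' hrep => ?_⟩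
  rw [hIoo] at hy'
  -- The binder of `∫ x in a..b, ‖y' x‖ ^ 2 + …` extends to the end of the statement, so the
  -- right-hand side is `ε * ∫ (‖y'‖² + M * ∫ ‖y‖²)`.
  rw [intervalIntegral_add_const_of_le hab.le (hy'.integrable_norm_pow two_ne_zero),
    intervalIntegral.integral_of_le hab.le (f := fun x => ‖y x‖ ^ 2)]
  set D := ∫ x in Ioc a b, ‖y' x‖ ^ 2
  set N := ∫ x in Ioc a b, ‖y x‖ ^ 2
  have hS : 0 ≤ ε / (2 * K) * D + M * N := by positivity
  refine (form_add_boundary_le_of_sq_norm_le hab.le hε hS hu hy' α β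
    (hsup y y' hy' hrep)).trans ?_
  have hKδ : K * (ε / (2 * K)) = ε / 2 := by field_simp
  have hba : (b - a) * (K * M / (ε * (b - a)) * N) = K * M * N / ε := by
    field_simp [(sub_pos.2 hab).ne']
  rw [hba]
  calc _ ≤ ε / 2 * D + K * (ε / (2 * K) * D + M * N) := by
        gcongr; exact le_add_of_nonneg_right zero_le_one
    _ = ε * (D + K * M * N / ε) := by
        rw [mul_add K, ← mul_assoc, hKδ]; field_simp; ring
end

section
/- Let $n\ge 3$ and let $V\in L^n(\mathbb{R}^n;\mathbb{R}^n)$. Then for every $\varepsilon>0$ there exists a constant $C>0$ (depending on $\varepsilon$, $V$ and $n$) such that for every smooth compactly supported function $u:\mathbb{R}^n\to\mathbb{C}$: $\Big|\int_{\mathbb{R}^n}\big(V(x)\cdot\nabla u(x)\big)\,\overline{u(x)}\,dx\Big| \;\le\; \varepsilon\int_{\mathbb{R}^n}|\nabla u(x)|^2\,dx \;+\; C\int_{\mathbb{R}^n}|u(x)|^2\,dx$. -/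
open Set ComplexConjugate MeasureTheory
open Filter Topology
open scoped ENNReal NNReal

namespace FormBoundAux

lemma ofReal_norm_eq_coe_nnnorm {E : Type*} [SeminormedAddCommGroup E] (a : E) :
    ENNReal.ofReal ‖a‖ = (‖a‖₊ : ℝ≥0∞) := by
  rw [ofReal_norm_eq_enorm, enorm_eq_nnnorm]

lemma cs_sum {n : ℕ} (a : Fin n → ℝ) (z : Fin n → ℂ) :
    ‖∑ i, a i • z i‖ ≤ Real.sqrt (∑ i, a i ^ 2) * Real.sqrt (∑ i, ‖z i‖ ^ 2) := by
  have h1 : ‖∑ i, a i • z i‖ ≤ ∑ i, |a i| * ‖z i‖ := by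
    refine (norm_sum_le _ _).trans (le_of_eq ?_)
    simp [norm_smul]
  have h2 : (∑ i, |a i| * ‖z i‖) ^ 2 ≤ (∑ i, a i ^ 2) * ∑ i, ‖z i‖ ^ 2 := by
    have := Finset.sum_mul_sq_le_sq_mul_sq Finset.univ (fun i => |a i|) (fun i => ‖z i‖)
    simpa [sq_abs] using this
  have h3 : ∑ i, |a i| * ‖z i‖ ≤ Real.sqrt ((∑ i, a i ^ 2) * ∑ i, ‖z i‖ ^ 2) := by
    have hnn : (0:ℝ) ≤ ∑ i, |a i| * ‖z i‖ :=
      Finset.sum_nonneg fun i _ => mul_nonneg (abs_nonneg _) (norm_nonneg _)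
    nlinarith [Real.sq_sqrt (le_trans (sq_nonneg _) h2 : (0:ℝ) ≤ (∑ i, a i ^ 2) * ∑ i, ‖z i‖ ^ 2),
      Real.sqrt_nonneg ((∑ i, a i ^ 2) * ∑ i, ‖z i‖ ^ 2)]
  calc ‖∑ i, a i • z i‖ ≤ ∑ i, |a i| * ‖z i‖ := h1
    _ ≤ Real.sqrt ((∑ i, a i ^ 2) * ∑ i, ‖z i‖ ^ 2) := h3
    _ = _ := Real.sqrt_mul (Finset.sum_nonneg fun i _ => sq_nonneg _) _

lemma euclid_norm_eq {n : ℕ} (y : EuclideanSpace ℝ (Fin n)) :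
    Real.sqrt (∑ i, y i ^ 2) = ‖y‖ := by
  rw [EuclideanSpace.norm_eq]
  congr 1
  exact Finset.sum_congr rfl fun i _ => by rw [Real.norm_eq_abs, sq_abs]

lemma euclid_repr {n : ℕ} (y : EuclideanSpace ℝ (Fin n)) :
    y = ∑ i, y i • EuclideanSpace.single i (1:ℝ) := by
  ext j
  rw [show ((∑ i, y i • EuclideanSpace.single i (1:ℝ)) : EuclideanSpace ℝ (Fin n)) j
      = ∑ i, (y i • EuclideanSpace.single i (1:ℝ) : EuclideanSpace ℝ (Fin n)) j from by
    rw [WithLp.ofLp_sum, Finset.sum_apply]]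
  simp [EuclideanSpace.single_apply, eq_comm]

lemma opnorm_le_sqrt {n : ℕ} (L : EuclideanSpace ℝ (Fin n) →L[ℝ] ℂ) :
    ‖L‖ ≤ Real.sqrt (∑ i, ‖L (EuclideanSpace.single i (1:ℝ))‖ ^ 2) := by
  refine ContinuousLinearMap.opNorm_le_bound _ (Real.sqrt_nonneg _) fun y => ?_
  have hLy : L y = ∑ i, y i • L (EuclideanSpace.single i (1:ℝ)) := by
    conv_lhs => rw [euclid_repr y]
    simp [map_sum]
  rw [hLy]
  calc ‖∑ i, y i • L (EuclideanSpace.single i (1:ℝ))‖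
      ≤ Real.sqrt (∑ i, (y i) ^ 2) * Real.sqrt (∑ i, ‖L (EuclideanSpace.single i (1:ℝ))‖ ^ 2) :=
        cs_sum _ _
    _ = _ := by rw [euclid_norm_eq, mul_comm]

lemma tail_small {α : Type*} [MeasurableSpace α] {μ : Measure α} {β : Type*}
    [NormedAddCommGroup β] {Vm : α → β} (hVmsm : StronglyMeasurable Vm) {r : ℝ}
    (hfin : ∫⁻ x, (‖Vm x‖₊ : ℝ≥0∞) ^ r ∂μ ≠ ∞) {δ : ℝ≥0∞} (hδ : 0 < δ) :
    ∃ M : ℝ, 0 < M ∧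
      ∫⁻ x, {y | M < ‖Vm y‖}.indicator (fun y => (‖Vm y‖₊ : ℝ≥0∞) ^ r) x ∂μ < δ := by
  have hmeas : Measurable fun x => (‖Vm x‖₊ : ℝ≥0∞) ^ r :=
    hVmsm.enorm.pow_const r
  have hSmeas : ∀ M : ℕ, MeasurableSet {y | (M:ℝ) < ‖Vm y‖} :=
    fun M => measurableSet_lt measurable_const hVmsm.norm.measurable
  have htd : Tendsto (fun M : ℕ => ∫⁻ x,
      {y | (M:ℝ) < ‖Vm y‖}.indicator (fun y => (‖Vm y‖₊ : ℝ≥0∞) ^ r) x ∂μ) atTop (𝓝 0) := by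
    have h0 : (0 : ℝ≥0∞) = ∫⁻ x, (0 : α → ℝ≥0∞) x ∂μ := by simp
    rw [h0]
    apply tendsto_lintegral_of_dominated_convergence (fun x => (‖Vm x‖₊ : ℝ≥0∞) ^ r)
    · exact fun M => hmeas.indicator (hSmeas M)
    · exact fun M => Filter.Eventually.of_forall fun x => Set.indicator_le_self _ _ x
    · exact hfin
    · refine Filter.Eventually.of_forall fun x => ?_
      have : ∀ᶠ M : ℕ in atTop,
          {y | (M:ℝ) < ‖Vm y‖}.indicator (fun y => (‖Vm y‖₊ : ℝ≥0∞) ^ r) x = 0 := by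
        filter_upwards [eventually_ge_atTop (Nat.ceil ‖Vm x‖)] with M hM
        apply Set.indicator_of_notMem
        simp only [Set.mem_setOf_eq, not_lt]
        calc ‖Vm x‖ ≤ (Nat.ceil ‖Vm x‖ : ℝ) := Nat.le_ceil _
          _ ≤ (M : ℝ) := by exact_mod_cast hM
      exact Tendsto.congr' (this.mono fun M h => h.symm) tendsto_const_nhds
  have := htd.eventually_lt_const hδ
  obtain ⟨M, hM1, hM2⟩ := (this.and (eventually_ge_atTop 1)).exists
  exact ⟨(M : ℝ), by exact_mod_cast hM2, hM1⟩

end FormBoundAux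

open FormBoundAux

set_option maxHeartbeats 1000000 in
/-- For `n ≥ 3` and `V ∈ Lⁿ(ℝⁿ; ℝⁿ)`, for every `ε > 0` there is a
constant `C > 0` such that for every test function `u`:
`|∫ (V·∇u) ū| ≤ ε ∫ |∇u|² + C ∫ |u|²`. -/
theorem infinitesimal_form_bound_divV_perturbation
    (n : ℕ) (hn : 3 ≤ n)
    (V : EuclideanSpace ℝ (Fin n) → EuclideanSpace ℝ (Fin n))
    (hV : MemLp V n volume) :
    ∀ ε > 0, ∃ C > 0,
      ∀ u : EuclideanSpace ℝ (Fin n) → ℂ, ContDiff ℝ (⊤ : ℕ∞) u → HasCompactSupport u →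
        ‖∫ x, (∑ i, (V x i : ℂ) * fderiv ℝ u x (EuclideanSpace.single i (1 : ℝ)))
            * conj (u x)‖ ≤
          ε * (∫ x, ∑ i, ‖fderiv ℝ u x (EuclideanSpace.single i (1 : ℝ))‖ ^ 2)
            + C * ∫ x, ‖u x‖ ^ 2 := by
  classical
  intro ε hε
  obtain ⟨Vm, hVmsm, hVae⟩ : ∃ Vm, StronglyMeasurable Vm ∧ V =ᵐ[volume] Vm :=
    ⟨hV.aestronglyMeasurable.mk V, hV.aestronglyMeasurable.stronglyMeasurable_mk,
      hV.aestronglyMeasurable.ae_eq_mk⟩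
  have hVm : MemLp Vm (n : ℝ≥0∞) volume := hV.ae_eq hVae
  have hn3 : (3:ℝ) ≤ (n:ℝ) := by exact_mod_cast hn
  have hnpos : (0:ℝ) < (n:ℝ) := by linarith
  have hn2 : (0:ℝ) < (n:ℝ) - 2 := by linarith
  have hnne : (n:ℝ) ≠ 0 := hnpos.ne'
  -- finiteness of ∫⁻ ‖Vm‖^n
  have hfin : ∫⁻ x, (‖Vm x‖₊ : ℝ≥0∞) ^ (n:ℝ) ∂volume ≠ ∞ := by
    have h1 := hVm.eLpNorm_lt_top
    have hnn0 : (n : ℝ≥0) ≠ 0 := Nat.cast_ne_zero.mpr (by omega)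
    rw [show ((n:ℕ) : ℝ≥0∞) = ((n : ℝ≥0) : ℝ≥0∞) from by push_cast; rfl,
      eLpNorm_nnreal_eq_lintegral hnn0,
      ENNReal.rpow_lt_top_iff_of_pos (by positivity)] at h1
    have h2 := h1.ne
    simp only [NNReal.coe_natCast] at h2
    exact h2
  -- Sobolev constant
  set K : ℝ≥0 :=
    SNormLESNormFDerivOfEqConst (F := ℂ) (volume : Measure (EuclideanSpace ℝ (Fin n)))
      ((2:ℝ≥0) : ℝ) with hK
  set δ : ℝ := ε / (2 * ((K:ℝ) + 1)) with hδdef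
  have hδpos : 0 < δ := by positivity
  obtain ⟨M, hMpos, hMtail⟩ := tail_small hVmsm hfin
    (δ := ENNReal.ofReal δ ^ (n:ℝ))
    (ENNReal.rpow_pos (ENNReal.ofReal_pos.mpr hδpos) ENNReal.ofReal_ne_top)
  refine ⟨M^2/(2*ε) + 1, by positivity, ?_⟩
  intro u hu h2u
  set D : Fin n → EuclideanSpace ℝ (Fin n) → ℂ :=
    fun i x => fderiv ℝ u x (EuclideanSpace.single i (1:ℝ)) with hD
  set g : EuclideanSpace ℝ (Fin n) → ℝ := fun x => ∑ i, ‖D i x‖ ^ 2 with hg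
  have hconts : Continuous fun x => fderiv ℝ u x := hu.continuous_fderiv (by simp)
  have hDc : ∀ i, Continuous (D i) := fun i => hconts.clm_apply continuous_const
  have hgc : Continuous g := continuous_finset_sum _ fun i _ => ((hDc i).norm.pow 2)
  have hgnn : ∀ x, 0 ≤ g x := fun x => Finset.sum_nonneg fun i _ => sq_nonneg _
  have huc : Continuous u := hu.continuous
  have hgsupp : HasCompactSupport g := by
    refine HasCompactSupport.mono (h2u.fderiv ℝ) ?_
    intro x hx
    simp only [Function.mem_support] at hx ⊢
    intro h0
    apply hx
    simp [hg, hD, h0]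
  have hu2supp : HasCompactSupport (fun x => ‖u x‖ ^ 2) := by
    refine HasCompactSupport.mono h2u ?_
    intro x hx
    simp only [Function.mem_support] at hx ⊢
    intro h0
    apply hx
    simp [h0]
  have hgInt : Integrable g := hgc.integrable_of_hasCompactSupport hgsupp
  have hu2Int : Integrable (fun x => ‖u x‖ ^ 2) :=
    (huc.norm.pow 2).integrable_of_hasCompactSupport hu2supp
  set I : ℝ≥0∞ := ∫⁻ x, ENNReal.ofReal (g x) ∂volume with hI
  set Iu : ℝ≥0∞ := ∫⁻ x, ENNReal.ofReal (‖u x‖ ^ 2) ∂volume with hIu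
  have hIfin : I ≠ ∞ := hgInt.lintegral_lt_top.ne
  have hIufin : Iu ≠ ∞ := hu2Int.lintegral_lt_top.ne
  have hIeq : ∫ x, g x = I.toReal :=
    integral_eq_lintegral_of_nonneg_ae (Filter.Eventually.of_forall hgnn)
      hgc.aestronglyMeasurable
  have hIueq : ∫ x, ‖u x‖ ^ 2 = Iu.toReal :=
    integral_eq_lintegral_of_nonneg_ae (Filter.Eventually.of_forall fun x => sq_nonneg _)
      (huc.norm.pow 2).aestronglyMeasurable
  set F : EuclideanSpace ℝ (Fin n) → ℂ :=
    fun x => (∑ i, (V x i : ℂ) * D i x) * (starRingEnd ℂ) (u x) with hF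
  -- measurability of F
  have hVc : ∀ i, AEStronglyMeasurable (fun x => V x i) volume := fun i =>
    ((EuclideanSpace.proj (𝕜 := ℝ) i).continuous).comp_aestronglyMeasurable
      hV.aestronglyMeasurable
  have hFm : AEStronglyMeasurable F volume := by
    apply AEStronglyMeasurable.mul
    · apply Finset.aestronglyMeasurable_fun_sum
      intro i _
      exact (Complex.continuous_ofReal.comp_aestronglyMeasurable (hVc i)).mul
        (hDc i).aestronglyMeasurable
    · exact (Complex.continuous_conj.comp huc).aestronglyMeasurable
  -- Step A
  have stepA : ‖∫ x, F x‖ ≤ (∫⁻ x, (‖F x‖₊ : ℝ≥0∞) ∂volume).toReal := by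
    calc ‖∫ x, F x‖ ≤ ∫ x, ‖F x‖ := norm_integral_le_integral_norm F
      _ = (∫⁻ x, ENNReal.ofReal ‖F x‖ ∂volume).toReal :=
        integral_eq_lintegral_of_nonneg_ae
          (Filter.Eventually.of_forall fun x => norm_nonneg _) hFm.norm
      _ = _ := by simp_rw [ofReal_norm_eq_coe_nnnorm]
  -- pointwise Cauchy-Schwarz
  have ptCS : ∀ x, ‖F x‖ ≤ ‖V x‖ * (Real.sqrt (g x) * ‖u x‖) := by
    intro x
    rw [hF]
    simp only [norm_mul, RCLike.norm_conj]
    have h1 : ‖∑ i, (V x i : ℂ) * D i x‖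
        ≤ Real.sqrt (∑ i, (V x i) ^ 2) * Real.sqrt (g x) := by
      have := cs_sum (fun i => V x i) (fun i => D i x)
      simpa [Complex.real_smul, hg] using this
    calc ‖∑ i, (V x i : ℂ) * D i x‖ * ‖u x‖
        ≤ (Real.sqrt (∑ i, (V x i) ^ 2) * Real.sqrt (g x)) * ‖u x‖ :=
          mul_le_mul_of_nonneg_right h1 (norm_nonneg _)
      _ = ‖V x‖ * (Real.sqrt (g x) * ‖u x‖) := by rw [euclid_norm_eq (V x)]; ring
  set S : Set (EuclideanSpace ℝ (Fin n)) := {y | M < ‖Vm y‖} with hS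
  have hSm : MeasurableSet S := measurableSet_lt measurable_const hVmsm.norm.measurable
  set W : EuclideanSpace ℝ (Fin n) → ℝ≥0∞ :=
    fun x => S.indicator (fun y => (‖Vm y‖₊ : ℝ≥0∞)) x with hW
  set h : EuclideanSpace ℝ (Fin n) → ℝ≥0∞ :=
    fun x => ENNReal.ofReal (Real.sqrt (g x) * ‖u x‖) with hh
  have hhm : Measurable h := (hgc.sqrt.mul huc.norm).measurable.ennreal_ofReal
  have hWm : Measurable W := hVmsm.enorm.indicator hSm
  have ptwise : ∀ᵐ x ∂(volume : Measure (EuclideanSpace ℝ (Fin n))),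
      (‖F x‖₊ : ℝ≥0∞) ≤ (ENNReal.ofReal M + W x) * h x := by
    filter_upwards [hVae] with x hx
    calc (‖F x‖₊ : ℝ≥0∞) = ENNReal.ofReal ‖F x‖ := (ofReal_norm_eq_coe_nnnorm _).symm
      _ ≤ ENNReal.ofReal (‖V x‖ * (Real.sqrt (g x) * ‖u x‖)) :=
          ENNReal.ofReal_le_ofReal (ptCS x)
      _ = ENNReal.ofReal ‖V x‖ * h x := by
          rw [ENNReal.ofReal_mul (norm_nonneg _)]
      _ ≤ (ENNReal.ofReal M + W x) * h x := by
          apply mul_le_mul_left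
          rw [hx]
          by_cases hc : x ∈ S
          · simp only [hW, Set.indicator_of_mem hc]
            rw [ofReal_norm_eq_coe_nnnorm]
            exact le_add_self
          · have : ‖Vm x‖ ≤ M := by
              have := hc
              simp only [hS, Set.mem_setOf_eq, not_lt] at this
              exact this
            calc ENNReal.ofReal ‖Vm x‖ ≤ ENNReal.ofReal M := ENNReal.ofReal_le_ofReal this
              _ ≤ _ := le_add_of_le_of_nonneg le_rfl zero_le
  have key1 : ∫⁻ x, (‖F x‖₊ : ℝ≥0∞) ∂volume
      ≤ (∫⁻ x, ENNReal.ofReal M * h x ∂volume) + ∫⁻ x, W x * h x ∂volume := by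
    calc ∫⁻ x, (‖F x‖₊ : ℝ≥0∞) ∂volume
        ≤ ∫⁻ x, (ENNReal.ofReal M + W x) * h x ∂volume := lintegral_mono_ae ptwise
      _ = ∫⁻ x, (ENNReal.ofReal M * h x + W x * h x) ∂volume := by
          simp_rw [add_mul]
      _ ≤ _ := le_of_eq (lintegral_add_left (measurable_const.mul hhm) _)
  -- term 1
  have hterm1 : ∫⁻ x, ENNReal.ofReal M * h x ∂volume
      ≤ ENNReal.ofReal (ε/2) * I + ENNReal.ofReal (M^2/(2*ε)) * Iu := by
    have pt : ∀ x, ENNReal.ofReal M * h x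
        ≤ ENNReal.ofReal (ε/2) * ENNReal.ofReal (g x)
          + ENNReal.ofReal (M^2/(2*ε)) * ENNReal.ofReal (‖u x‖ ^ 2) := by
      intro x
      rw [hh, ← ENNReal.ofReal_mul hMpos.le, ← ENNReal.ofReal_mul (by linarith),
        ← ENNReal.ofReal_mul (by positivity),
        ← ENNReal.ofReal_add (by nlinarith [hgnn x]) (by positivity)]
      apply ENNReal.ofReal_le_ofReal
      have hs : Real.sqrt (g x) ^ 2 = g x := Real.sq_sqrt (hgnn x)
      have h2ε : (0:ℝ) < 2*ε := by linarith
      have key : 2*ε*(M * (Real.sqrt (g x) * ‖u x‖))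
          ≤ 2*ε*(ε/2 * g x + M^2/(2*ε) * ‖u x‖^2) := by
        have expand : 2*ε*(ε/2 * g x + M^2/(2*ε) * ‖u x‖^2)
            = ε^2 * g x + M^2 * ‖u x‖^2 := by field_simp
        rw [expand]
        nlinarith [sq_nonneg (ε * Real.sqrt (g x) - M * ‖u x‖), hs]
      exact le_of_mul_le_mul_left key h2ε
    calc ∫⁻ x, ENNReal.ofReal M * h x ∂volume
        ≤ ∫⁻ x, (ENNReal.ofReal (ε/2) * ENNReal.ofReal (g x)
            + ENNReal.ofReal (M^2/(2*ε)) * ENNReal.ofReal (‖u x‖ ^ 2)) ∂volume :=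
          lintegral_mono pt
      _ = _ := by
          rw [lintegral_add_left (hgc.measurable.ennreal_ofReal.const_mul _),
            lintegral_const_mul _ hgc.measurable.ennreal_ofReal,
            lintegral_const_mul _ ((huc.norm.measurable.pow_const 2).ennreal_ofReal)]
  -- term 2 : Hölder + Sobolev
  set p'r : ℝ := 2*(n:ℝ)/((n:ℝ)-2) with hp'def
  have hp'pos : 0 < p'r := by positivity
  have hp'ne : p'r ≠ 0 := hp'pos.ne'
  set f0 : EuclideanSpace ℝ (Fin n) → ℝ≥0∞ :=
    fun x => S.indicator (fun y => (‖Vm y‖₊ : ℝ≥0∞) ^ (n:ℝ)) x with hf0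
  set f1 : EuclideanSpace ℝ (Fin n) → ℝ≥0∞ := fun x => ENNReal.ofReal (g x) with hf1
  set f2 : EuclideanSpace ℝ (Fin n) → ℝ≥0∞ :=
    fun x => ENNReal.ofReal (‖u x‖ ^ p'r) with hf2
  have hHolder : ∫⁻ x, W x * h x ∂volume
      ≤ (∫⁻ x, f0 x ∂volume) ^ (1/(n:ℝ))
        * (∫⁻ x, f1 x ∂volume) ^ ((1:ℝ)/2)
        * (∫⁻ x, f2 x ∂volume) ^ (1/p'r) := by
    have hprod : ∀ x, W x * h x = f0 x ^ (1/(n:ℝ)) * f1 x ^ ((1:ℝ)/2) * f2 x ^ (1/p'r) := by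
      intro x
      have e0 : f0 x ^ (1/(n:ℝ)) = W x := by
        simp only [hf0, hW]
        by_cases hc : x ∈ S
        · rw [Set.indicator_of_mem hc, Set.indicator_of_mem hc, ← ENNReal.rpow_mul,
            mul_one_div_cancel hnne, ENNReal.rpow_one]
        · rw [Set.indicator_of_notMem hc, Set.indicator_of_notMem hc,
            ENNReal.zero_rpow_of_pos (by positivity)]
      have e1 : f1 x ^ ((1:ℝ)/2) = ENNReal.ofReal (Real.sqrt (g x)) := by
        simp only [hf1]
        rw [ENNReal.ofReal_rpow_of_nonneg (hgnn x) (by norm_num), Real.sqrt_eq_rpow]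
      have e2 : f2 x ^ (1/p'r) = ENNReal.ofReal ‖u x‖ := by
        simp only [hf2]
        rw [← ENNReal.ofReal_rpow_of_nonneg (norm_nonneg _) hp'pos.le,
          ← ENNReal.rpow_mul, mul_one_div_cancel hp'ne, ENNReal.rpow_one]
      rw [e0, e1, e2]
      simp only [hh]
      rw [ENNReal.ofReal_mul (Real.sqrt_nonneg _), mul_assoc]
    calc ∫⁻ x, W x * h x ∂volume
        = ∫⁻ x, ∏ i : Fin 3,
            (![f0, f1, f2] i x) ^ (![1/(n:ℝ), (1:ℝ)/2, 1/p'r] i) ∂volume := by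
          apply lintegral_congr
          intro x
          rw [Fin.prod_univ_three]
          simpa using hprod x
      _ ≤ ∏ i : Fin 3, (∫⁻ x, (![f0, f1, f2] i x) ∂volume) ^ (![1/(n:ℝ), (1:ℝ)/2, 1/p'r] i) := by
          apply ENNReal.lintegral_prod_norm_pow_le
          · intro i _
            fin_cases i <;>
              simp only [Matrix.cons_val_zero, Matrix.cons_val_one, Matrix.head_cons,
                Matrix.cons_val_two, Matrix.tail_cons, hf0, hf1, hf2]
            · exact ((hVmsm.enorm.pow_const (n:ℝ)).indicator hSm).aemeasurable
            · exact hgc.measurable.ennreal_ofReal.aemeasurable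
            · exact ((huc.norm.rpow_const fun x => Or.inr hp'pos.le).measurable.ennreal_ofReal).aemeasurable
          · rw [Fin.sum_univ_three]
            simp only [Matrix.cons_val_zero, Matrix.cons_val_one, Matrix.head_cons,
              Matrix.cons_val_two, Matrix.tail_cons]
            rw [hp'def]
            field_simp
            ring
          · intro i _
            fin_cases i
            · show (0:ℝ) ≤ 1/(n:ℝ); positivity
            · show (0:ℝ) ≤ (1:ℝ)/2; norm_num
            · show (0:ℝ) ≤ 1/p'r; positivity
      _ = _ := by rw [Fin.prod_univ_three]; simp
  -- factor bounds
  have factor0 : (∫⁻ x, f0 x ∂volume) ^ (1/(n:ℝ)) ≤ ENNReal.ofReal δ := by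
    calc (∫⁻ x, f0 x ∂volume) ^ (1/(n:ℝ))
        ≤ (ENNReal.ofReal δ ^ (n:ℝ)) ^ (1/(n:ℝ)) :=
          ENNReal.rpow_le_rpow hMtail.le (by positivity)
      _ = ENNReal.ofReal δ := by
          rw [← ENNReal.rpow_mul, mul_one_div_cancel hnne, ENNReal.rpow_one]
  -- Sobolev bound for factor 2
  have hfd : eLpNorm (fderiv ℝ u) ((2:ℝ≥0) : ℝ≥0∞) volume ≤ I ^ ((1:ℝ)/2) := by
    rw [eLpNorm_nnreal_eq_lintegral two_ne_zero]
    have : ∫⁻ x, ((‖fderiv ℝ u x‖₊ : ℝ≥0∞)) ^ (((2:ℝ≥0)):ℝ) ∂volume ≤ I := by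
      apply lintegral_mono
      intro x
      have h1 : ‖fderiv ℝ u x‖ ≤ Real.sqrt (g x) := by
        have := opnorm_le_sqrt (fderiv ℝ u x)
        simpa [hg, hD] using this
      calc ((‖fderiv ℝ u x‖₊ : ℝ≥0∞)) ^ (((2:ℝ≥0)):ℝ)
          = ENNReal.ofReal (‖fderiv ℝ u x‖ ^ (((2:ℝ≥0)):ℝ)) := by
            rw [← ofReal_norm_eq_coe_nnnorm,
              ENNReal.ofReal_rpow_of_nonneg (norm_nonneg _) (by norm_num)]
        _ ≤ ENNReal.ofReal (g x) := by
            apply ENNReal.ofReal_le_ofReal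
            have h2 : ‖fderiv ℝ u x‖ ^ (((2:ℝ≥0)):ℝ) = ‖fderiv ℝ u x‖ ^ (2:ℕ) := by
              rw [show (((2:ℝ≥0)):ℝ) = ((2:ℕ):ℝ) by norm_num, Real.rpow_natCast]
            rw [h2]
            nlinarith [norm_nonneg (fderiv ℝ u x), Real.sq_sqrt (hgnn x),
              Real.sqrt_nonneg (g x)]
    calc (∫⁻ x, ((‖fderiv ℝ u x‖₊ : ℝ≥0∞)) ^ (((2:ℝ≥0)):ℝ) ∂volume) ^ (1/(((2:ℝ≥0)):ℝ))
        ≤ I ^ (1/(((2:ℝ≥0)):ℝ)) := ENNReal.rpow_le_rpow this (by positivity)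
      _ = I ^ ((1:ℝ)/2) := by norm_num
  have factor2 : (∫⁻ x, f2 x ∂volume) ^ (1/p'r) ≤ (K : ℝ≥0∞) * I ^ ((1:ℝ)/2) := by
    have hp''pos : (0:ℝ) < p'r := hp'pos
    set p'' : ℝ≥0 := ⟨p'r, hp'pos.le⟩ with hp''
    have hp''0 : p'' ≠ 0 := by
      simp only [← NNReal.coe_ne_zero]
      exact hp'ne
    have hLHS : (∫⁻ x, f2 x ∂volume) ^ (1/p'r) = eLpNorm u (p'' : ℝ≥0∞) volume := by
      rw [eLpNorm_nnreal_eq_lintegral hp''0]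
      have hco : ((p'' : ℝ≥0) : ℝ) = p'r := rfl
      have : ∀ x, f2 x = ((‖u x‖₊ : ℝ≥0∞)) ^ ((p'':ℝ≥0):ℝ) := by
        intro x
        simp only [hf2]
        rw [← ofReal_norm_eq_coe_nnnorm, hco,
          ENNReal.ofReal_rpow_of_nonneg (norm_nonneg _) hp'pos.le]
      rw [lintegral_congr this, hco]; rfl
    have sob := eLpNorm_le_eLpNorm_fderiv_of_eq (F := ℂ)
      (volume : Measure (EuclideanSpace ℝ (Fin n))) (hu.of_le (by simp)) h2u
      (p := 2) (p' := p'') one_le_two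
      (by rw [finrank_euclideanSpace_fin]; omega)
      (by
        rw [finrank_euclideanSpace_fin]
        have hco : ((p'' : ℝ≥0) : ℝ) = p'r := rfl
        rw [hco, hp'def, inv_div]
        push_cast
        rw [div_eq_iff (by positivity)]
        field_simp)
    rw [hLHS]
    calc eLpNorm u (p'' : ℝ≥0∞) volume
        ≤ (K : ℝ≥0∞) * eLpNorm (fderiv ℝ u) ((2:ℝ≥0) : ℝ≥0∞) volume := by
          convert sob using 3
      _ ≤ (K : ℝ≥0∞) * I ^ ((1:ℝ)/2) := mul_le_mul_right hfd _
  have hterm2 : ∫⁻ x, W x * h x ∂volume ≤ ENNReal.ofReal (ε/2) * I := by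
    have hII : I ^ ((1:ℝ)/2) * I ^ ((1:ℝ)/2) = I := by
      rw [← ENNReal.rpow_add_of_nonneg ((1:ℝ)/2) ((1:ℝ)/2) (by norm_num) (by norm_num)]
      norm_num
    calc ∫⁻ x, W x * h x ∂volume
        ≤ (∫⁻ x, f0 x ∂volume) ^ (1/(n:ℝ)) * (∫⁻ x, f1 x ∂volume) ^ ((1:ℝ)/2)
            * (∫⁻ x, f2 x ∂volume) ^ (1/p'r) := hHolder
      _ ≤ ENNReal.ofReal δ * I ^ ((1:ℝ)/2) * ((K : ℝ≥0∞) * I ^ ((1:ℝ)/2)) := by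
          have h1 : (∫⁻ x, f1 x ∂volume) ^ ((1:ℝ)/2) = I ^ ((1:ℝ)/2) := by rw [hI]
          rw [h1]
          exact mul_le_mul (mul_le_mul_left factor0 _) factor2 zero_le zero_le
      _ = (ENNReal.ofReal δ * (K : ℝ≥0∞)) * (I ^ ((1:ℝ)/2) * I ^ ((1:ℝ)/2)) := by ring
      _ = (ENNReal.ofReal δ * (K : ℝ≥0∞)) * I := by rw [hII]
      _ ≤ ENNReal.ofReal (ε/2) * I := by
          apply mul_le_mul_left
          calc ENNReal.ofReal δ * (K : ℝ≥0∞)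
              ≤ ENNReal.ofReal δ * ENNReal.ofReal ((K:ℝ) + 1) := by
                apply mul_le_mul_right
                rw [← ENNReal.ofReal_coe_nnreal]
                exact ENNReal.ofReal_le_ofReal (by linarith)
            _ = ENNReal.ofReal (δ * ((K:ℝ) + 1)) := by
                rw [ENNReal.ofReal_mul hδpos.le]
            _ = ENNReal.ofReal (ε/2) := by
                congr 1
                rw [hδdef]
                field_simp
  -- combine
  have total : ∫⁻ x, (‖F x‖₊ : ℝ≥0∞) ∂volume
      ≤ ENNReal.ofReal ε * I + ENNReal.ofReal (M^2/(2*ε) + 1) * Iu := by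
    calc ∫⁻ x, (‖F x‖₊ : ℝ≥0∞) ∂volume
        ≤ (∫⁻ x, ENNReal.ofReal M * h x ∂volume) + ∫⁻ x, W x * h x ∂volume := key1
      _ ≤ (ENNReal.ofReal (ε/2) * I + ENNReal.ofReal (M^2/(2*ε)) * Iu)
          + ENNReal.ofReal (ε/2) * I := add_le_add hterm1 hterm2
      _ = (ENNReal.ofReal (ε/2) + ENNReal.ofReal (ε/2)) * I
          + ENNReal.ofReal (M^2/(2*ε)) * Iu := by ring
      _ = ENNReal.ofReal ε * I + ENNReal.ofReal (M^2/(2*ε)) * Iu := by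
          rw [← ENNReal.ofReal_add (by linarith) (by linarith)]
          norm_num
      _ ≤ _ := by
          apply add_le_add_right
          apply mul_le_mul_left
          exact ENNReal.ofReal_le_ofReal (by linarith)
  have hRfin : ENNReal.ofReal ε * I + ENNReal.ofReal (M^2/(2*ε) + 1) * Iu ≠ ∞ :=
    ENNReal.add_ne_top.mpr
      ⟨ENNReal.mul_ne_top ENNReal.ofReal_ne_top hIfin,
        ENNReal.mul_ne_top ENNReal.ofReal_ne_top hIufin⟩
  calc ‖∫ x, F x‖ ≤ (∫⁻ x, (‖F x‖₊ : ℝ≥0∞) ∂volume).toReal := stepA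
    _ ≤ (ENNReal.ofReal ε * I + ENNReal.ofReal (M^2/(2*ε) + 1) * Iu).toReal :=
        ENNReal.toReal_mono hRfin total
    _ = ε * I.toReal + (M^2/(2*ε) + 1) * Iu.toReal := by
        rw [ENNReal.toReal_add (ENNReal.mul_ne_top ENNReal.ofReal_ne_top hIfin)
          (ENNReal.mul_ne_top ENNReal.ofReal_ne_top hIufin),
          ENNReal.toReal_mul, ENNReal.toReal_mul,
          ENNReal.toReal_ofReal hε.le, ENNReal.toReal_ofReal (by positivity)]
    _ = ε * (∫ x, g x) + (M^2/(2*ε) + 1) * ∫ x, ‖u x‖ ^ 2 := by rw [hIeq, hIueq]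
end
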